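/- Given the positive-vacuum phase convention ⟨0| U^mat_z |0⟩ > 0 for all spin configurations z, the unitaries U^mat_z satisfy the cocycle-type locality identity (U^mat_z)† U^mat_{z+i} = (U^mat_{z+j})† U^mat_{z+i+j} for any two spins i, j separated by distance greater than O(R), given that both sides implement the same QCA (are equal up to a phase) and that ⟨Ψ(M(z))|Ψ(M(z'))⟩ > 0 for all pairs of domain-wall manifolds. -/

import Mathlib

/-!
Multiplying the phase relation `U_z† U_{z+i} = c • U_{z+j}† U_{z+i+j}` by `U_z` on the left and
by `U_{z+i+j}†` on the right gives `U_{z+i} U_{z+i+j}† = c • U_z U_{z+j}†`. Both vacuum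
expectation values are positive overlaps, so the phase `c` is a positive real number of
modulus one, i.e. `c = 1`.
-/

noncomputable section

open Matrix

open scoped ComplexOrder

/-- the spin configuration `z + i`: flip spin `i` in `z` -/
def flipAt {S : Type*} [DecidableEq S] (z : S → Bool) (i : S) : S → Bool :=
  Function.update z i (!(z i))

theorem Complex.eq_one_of_norm_eq_one_of_pos_mul {c b : ℂ} (hc : ‖c‖ = 1) (hb : 0 < b)
    (hcb : 0 < c * b) : c = 1 := by
  have hc_pos : 0 < c := by simpa [hb.ne'] using div_pos hcb hb
  rw [eq_coe_norm_of_nonneg hc_pos.le, hc, Complex.ofReal_one]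

theorem mul_star_eq_smul_of_star_mul_eq_smul {R A : Type*} [Monoid A] [StarMul A] [SMul R A]
    [IsScalarTower R A A] [SMulCommClass R A A] {U₁ U₂ U₃ U₄ : A} {c : R}
    (hU₁ : U₁ ∈ unitary A) (hU₄ : U₄ ∈ unitary A)
    (h : star U₁ * U₂ = c • (star U₃ * U₄)) : U₂ * star U₄ = c • (U₁ * star U₃) :=
  calc U₂ * star U₄ = U₁ * (star U₁ * U₂) * star U₄ := by
        rw [← mul_assoc, Unitary.mul_star_self_of_mem hU₁, one_mul]
    _ = c • (U₁ * star U₃ * (U₄ * star U₄)) := by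
        rw [h, mul_smul_comm, smul_mul_assoc]; simp only [mul_assoc]
    _ = c • (U₁ * star U₃) := by rw [Unitary.mul_star_self_of_mem hU₄, mul_one]

theorem stmt_14_general {S M : Type*} [DecidableEq S] [Fintype M] [DecidableEq M]
    (d : S → S → ℝ) (C : ℝ)
    (Umat : (S → Bool) → Matrix M M ℂ) (vac : M)
    (hunit : ∀ z, Umat z ∈ unitary (Matrix M M ℂ))
    -- both sides implement the same QCA, hence agree up to a phase
    (hphase : ∀ (z : S → Bool) (i j : S), C < d i j → ∃ c : ℂ, ‖c‖ = 1 ∧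
      star (Umat z) * Umat (flipAt z i) =
        c • (star (Umat (flipAt z j)) * Umat (flipAt (flipAt z i) j)))
    -- positivity of overlaps of Walker–Wang ground states, ⟨Ψ(M(z))|Ψ(M(z'))⟩ > 0
    (hoverlap : ∀ z z' : S → Bool,
      ((Umat z * star (Umat z')) vac vac).im = 0 ∧
        0 < ((Umat z * star (Umat z')) vac vac).re) :
    ∀ (z : S → Bool) (i j : S), C < d i j →
      star (Umat z) * Umat (flipAt z i) =
        star (Umat (flipAt z j)) * Umat (flipAt (flipAt z i) j) := by
  intro z i j hd
  obtain ⟨c, hc, hcocycle⟩ := hphase z i j hd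
  have hoverlap_pos (z z' : S → Bool) : 0 < (Umat z * star (Umat z')) vac vac :=
    Complex.pos_iff.mpr ⟨(hoverlap z z').2, (hoverlap z z').1.symm⟩
  have hconj := mul_star_eq_smul_of_star_mul_eq_smul (hunit z) (hunit _) hcocycle
  have hc_one : c = 1 := by
    refine Complex.eq_one_of_norm_eq_one_of_pos_mul hc (hoverlap_pos z (flipAt z j)) ?_
    simpa [hconj] using hoverlap_pos (flipAt z i) (flipAt (flipAt z i) j)
  rw [hcocycle, hc_one, one_smul]

theorem stmt_14 {S M : Type*} [DecidableEq S] [Fintype M] [DecidableEq M]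
    (d : S → S → ℝ) (C : ℝ)
    (Umat : (S → Bool) → Matrix M M ℂ) (vac : M)
    (hunit : ∀ z, Umat z ∈ unitary (Matrix M M ℂ))
    -- the positive-vacuum rule ⟨0| U^mat_z |0⟩ > 0
    (hpos : ∀ z, (Umat z vac vac).im = 0 ∧ 0 < (Umat z vac vac).re)
    -- both sides implement the same QCA, hence agree up to a phase
    (hphase : ∀ (z : S → Bool) (i j : S), C < d i j → ∃ c : ℂ, ‖c‖ = 1 ∧
      star (Umat z) * Umat (flipAt z i) =
        c • (star (Umat (flipAt z j)) * Umat (flipAt (flipAt z i) j)))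
    -- positivity of overlaps of Walker–Wang ground states, ⟨Ψ(M(z))|Ψ(M(z'))⟩ > 0
    (hoverlap : ∀ z z' : S → Bool,
      ((Umat z * star (Umat z')) vac vac).im = 0 ∧
        0 < ((Umat z * star (Umat z')) vac vac).re) :
    ∀ (z : S → Bool) (i j : S), C < d i j →
      star (Umat z) * Umat (flipAt z i) =
        star (Umat (flipAt z j)) * Umat (flipAt (flipAt z i) j) :=
  stmt_14_general d C Umat vac hunit hphase hoverlap

end
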